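/- arXiv:0903.3049 — 3 statements merged into one kernel-verified Lean document; each statement's English description precedes it below -/
import Mathlib

section
/- Let ψ : M → N and φ : N → L be K-linear maps between K-vector spaces, each having finite-dimensional kernel and cokernel. Then φ ∘ ψ has finite-dimensional kernel and cokernel, and ind(φ∘ψ) = ind(φ) + ind(ψ), where ind(f) := dim ker(f) − dim coker(f). -/
open Submodule LinearMap

/-- If a submodule and the quotient by it are finite-dimensional, so is the whole space. -/
lemma fd_of_sub_quot (K : Type*) [Field K] {V : Type*} [AddCommGroup V] [Module K V]
    (S : Submodule K V) [FiniteDimensional K S] [FiniteDimensional K (V ⧸ S)] :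
    FiniteDimensional K V := by
  rw [FiniteDimensional, Module.finite_def]
  have h1 : ((⊤ : Submodule K V).map S.mkQ).FG := by
    rw [Submodule.map_top, Submodule.range_mkQ]
    exact Module.finite_def.mp ‹_›
  have h2 : ((⊤ : Submodule K V) ⊓ LinearMap.ker S.mkQ).FG := by
    rw [top_inf_eq, Submodule.ker_mkQ]
    exact Module.Finite.iff_fg.mp ‹_›
  exact Submodule.fg_of_fg_map_of_fg_inf_ker S.mkQ h1 h2

lemma fd_of_ker_range (K : Type*) [Field K] {V W : Type*} [AddCommGroup V] [Module K V]
    [AddCommGroup W] [Module K W] (f : V →ₗ[K] W)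
    [FiniteDimensional K (LinearMap.ker f)] [FiniteDimensional K (LinearMap.range f)] :
    FiniteDimensional K V := by
  have : FiniteDimensional K (V ⧸ LinearMap.ker f) :=
    Module.Finite.equiv f.quotKerEquivRange.symm
  exact fd_of_sub_quot K (LinearMap.ker f)

/-- If `ψ : M → N` and `φ : N → L` are `K`-linear maps with finite-dimensional
kernel and cokernel, then so is `φ ∘ ψ`, and `ind (φ ∘ ψ) = ind φ + ind ψ`, where
`ind f = dim ker f − dim coker f`. -/
theorem index_additive (K : Type*) [Field K]
    (M N L : Type*) [AddCommGroup M] [Module K M] [AddCommGroup N] [Module K N]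
    [AddCommGroup L] [Module K L]
    (ψ : M →ₗ[K] N) (φ : N →ₗ[K] L)
    [FiniteDimensional K (LinearMap.ker ψ)]
    [FiniteDimensional K (N ⧸ LinearMap.range ψ)]
    [FiniteDimensional K (LinearMap.ker φ)]
    [FiniteDimensional K (L ⧸ LinearMap.range φ)] :
    FiniteDimensional K (LinearMap.ker (φ ∘ₗ ψ)) ∧
    FiniteDimensional K (L ⧸ LinearMap.range (φ ∘ₗ ψ)) ∧
    (Module.finrank K (LinearMap.ker (φ ∘ₗ ψ)) : ℤ)
        - Module.finrank K (L ⧸ LinearMap.range (φ ∘ₗ ψ))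
      = ((Module.finrank K (LinearMap.ker φ) : ℤ)
          - Module.finrank K (L ⧸ LinearMap.range φ))
        + ((Module.finrank K (LinearMap.ker ψ) : ℤ)
          - Module.finrank K (N ⧸ LinearMap.range ψ)) := by
  set p := LinearMap.ker φ with hp
  set q := LinearMap.range ψ with hq
  set r := LinearMap.range (φ ∘ₗ ψ) with hr
  -- the map f : ker (φ ∘ ψ) → N given by ψ
  set f : LinearMap.ker (φ ∘ₗ ψ) →ₗ[K] N := ψ ∘ₗ (LinearMap.ker (φ ∘ₗ ψ)).subtype with hf
  have hkerψle : LinearMap.ker ψ ≤ LinearMap.ker (φ ∘ₗ ψ) := by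
    intro x hx
    simp only [LinearMap.mem_ker, LinearMap.comp_apply] at *
    rw [hx, map_zero]
  have hkerf : LinearMap.ker f = (LinearMap.ker ψ).comap (LinearMap.ker (φ ∘ₗ ψ)).subtype := by
    exact LinearMap.ker_comp _ _
  have ekerf : (LinearMap.ker f) ≃ₗ[K] LinearMap.ker ψ := by
    rw [hkerf]; exact Submodule.comapSubtypeEquivOfLe hkerψle
  have hrangef : LinearMap.range f = p ⊓ q := by
    ext y
    constructor
    · rintro ⟨⟨x, hx⟩, rfl⟩
      exact ⟨hx, ⟨x, rfl⟩⟩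
    · rintro ⟨hy1, x, rfl⟩
      exact ⟨⟨x, hy1⟩, rfl⟩
  have fdkerf : FiniteDimensional K (LinearMap.ker f) := Module.Finite.equiv ekerf.symm
  have fdrangef : FiniteDimensional K (LinearMap.range f) := by
    rw [hrangef]; exact Submodule.finiteDimensional_of_le inf_le_left
  have fd1 : FiniteDimensional K (LinearMap.ker (φ ∘ₗ ψ)) := fd_of_ker_range K f
  -- equation 1
  have e1 : Module.finrank K (p ⊓ q : Submodule K N) + Module.finrank K (LinearMap.ker ψ)
      = Module.finrank K (LinearMap.ker (φ ∘ₗ ψ)) := by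
    have := LinearMap.finrank_range_add_finrank_ker f
    rwa [(LinearEquiv.ofEq _ _ hrangef).finrank_eq, ekerf.finrank_eq] at this
  -- the map g : N ⧸ q → L ⧸ r induced by φ
  have hle : q ≤ (r).comap φ := by
    rintro y ⟨x, rfl⟩
    exact ⟨x, rfl⟩
  set g : (N ⧸ q) →ₗ[K] (L ⧸ r) := Submodule.mapQ q r φ hle with hg
  -- the map h1 : p → N ⧸ q
  set h1 : p →ₗ[K] (N ⧸ q) := q.mkQ ∘ₗ p.subtype with hh1
  have hkerh1 : LinearMap.ker h1 = (p ⊓ q).comap p.subtype := by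
    rw [hh1, LinearMap.ker_comp, Submodule.ker_mkQ, Submodule.comap_inf,
      Submodule.comap_subtype_self, top_inf_eq]
  have ekerh1 : (LinearMap.ker h1) ≃ₗ[K] (p ⊓ q : Submodule K N) := by
    rw [hkerh1]; exact Submodule.comapSubtypeEquivOfLe inf_le_left
  have hrangeh1 : LinearMap.range h1 = LinearMap.ker g := by
    ext y
    obtain ⟨x, rfl⟩ := Submodule.Quotient.mk_surjective q y
    constructor
    · rintro ⟨⟨z, hz⟩, hzx⟩ -- hzx : mkQ z = mk x
      have hzx' : (Submodule.Quotient.mk z : N ⧸ q) = Submodule.Quotient.mk x := hzx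
      obtain ⟨m, hm⟩ := (Submodule.Quotient.eq q).mp hzx'
      simp only [LinearMap.mem_ker, hg, Submodule.mapQ_apply,
        Submodule.Quotient.mk_eq_zero, hr]
      have hz' : φ z = 0 := hz
      refine ⟨-m, ?_⟩
      have hx : ψ m = z - x := hm
      simp only [LinearMap.comp_apply, map_neg, hx, map_sub, hz', zero_sub, neg_neg]
    · intro hx
      simp only [LinearMap.mem_ker, hg, Submodule.mapQ_apply,
        Submodule.Quotient.mk_eq_zero, hr] at hx
      obtain ⟨m, hm⟩ := hx
      refine ⟨⟨x - ψ m, ?_⟩, ?_⟩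
      · simp only [hp, LinearMap.mem_ker, map_sub]
        rw [← LinearMap.comp_apply, hm, sub_self]
      · show (Submodule.Quotient.mk (x - ψ m) : N ⧸ q) = Submodule.Quotient.mk x
        rw [Submodule.Quotient.eq, sub_sub_cancel_left]
        exact neg_mem ⟨m, rfl⟩
  -- equation 2 : finrank (ker g) + finrank (p ⊓ q) = finrank p
  have e2 : Module.finrank K (LinearMap.ker g) + Module.finrank K (p ⊓ q : Submodule K N)
      = Module.finrank K p := by
    have := LinearMap.finrank_range_add_finrank_ker h1
    rwa [(LinearEquiv.ofEq _ _ hrangeh1).finrank_eq, ekerh1.finrank_eq] at this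
  -- range of g
  have hrangeg : LinearMap.range g = (LinearMap.range φ).map r.mkQ := by
    ext y
    obtain ⟨x, rfl⟩ := Submodule.Quotient.mk_surjective r y
    constructor
    · rintro ⟨z, hz⟩
      obtain ⟨n, rfl⟩ := Submodule.Quotient.mk_surjective q z
      simp only [hg, Submodule.mapQ_apply] at hz
      exact ⟨φ n, ⟨n, rfl⟩, hz⟩
    · rintro ⟨w, ⟨n, rfl⟩, hw⟩
      exact ⟨Submodule.Quotient.mk n, hw⟩
  have hle2 : r ≤ LinearMap.range φ := by
    rintro y ⟨x, rfl⟩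
    exact ⟨ψ x, rfl⟩
  have ecoker : ((L ⧸ r) ⧸ (LinearMap.range g)) ≃ₗ[K] (L ⧸ LinearMap.range φ) := by
    refine (Submodule.Quotient.equiv _ _ (LinearEquiv.refl K (L ⧸ r)) ?_).trans
      (Submodule.quotientQuotientEquivQuotient r (LinearMap.range φ) hle2)
    rw [hrangeg]
    exact Submodule.map_id _
  have fdrangeg : FiniteDimensional K (LinearMap.range g) := inferInstance
  have fdcokerg : FiniteDimensional K ((L ⧸ r) ⧸ (LinearMap.range g)) :=
    Module.Finite.equiv ecoker.symm
  have fd2 : FiniteDimensional K (L ⧸ r) := fd_of_sub_quot K (LinearMap.range g)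
  -- equation 3 : rank nullity for g
  have e3 : Module.finrank K (LinearMap.range g) + Module.finrank K (LinearMap.ker g)
      = Module.finrank K (N ⧸ q) := LinearMap.finrank_range_add_finrank_ker g
  -- equation 4 : finrank (L ⧸ r) = finrank coker g + finrank range g
  have e4 : Module.finrank K (L ⧸ LinearMap.range φ) + Module.finrank K (LinearMap.range g)
      = Module.finrank K (L ⧸ r) := by
    have := Submodule.finrank_quotient_add_finrank (LinearMap.range g)
    rwa [ecoker.finrank_eq] at this
  exact ⟨fd1, fd2, by omega⟩
end

section
/- In the algebra S₁ = K⟨x, y | yx = 1⟩, the left annihilator of x is the set {a ∈ S₁ : ax = 0} = ⊕_{i≥0} K·x^i(1 − xy), and the right annihilator of x is zero. -/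
noncomputable section

/-- The defining relation `y * x = 1` of the algebra `S₁ = K⟨x, y | yx = 1⟩`. -/
inductive S1Rel (K : Type) [Field K] :
    FreeAlgebra K (Fin 2) → FreeAlgebra K (Fin 2) → Prop
  | rel : S1Rel K (FreeAlgebra.ι K 1 * FreeAlgebra.ι K 0) 1

/-- The algebra `S₁ = K⟨x, y | yx = 1⟩` of one-sided inverses of `K[x]`. -/
abbrev S1 (K : Type) [Field K] : Type := RingQuot (S1Rel K)

/-- The canonical generator `x` of `S₁`. -/
def S1x (K : Type) [Field K] : S1 K :=
  RingQuot.mkAlgHom K (S1Rel K) (FreeAlgebra.ι K 0)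

/-- The canonical generator `y` of `S₁`. -/
def S1y (K : Type) [Field K] : S1 K :=
  RingQuot.mkAlgHom K (S1Rel K) (FreeAlgebra.ι K 1)

/-- The matrix units `E_{ij} = x^i y^j - x^{i+1} y^{j+1}` of `S₁`. -/
def S1E (K : Type) [Field K] (i j : ℕ) : S1 K :=
  S1x K ^ i * S1y K ^ j - S1x K ^ (i + 1) * S1y K ^ (j + 1)

variable (K : Type) [Field K]

lemma S1_yx : S1y K * S1x K = 1 := by
  have h := RingQuot.mkAlgHom_rel K (S1Rel.rel (K := K))
  simpa [S1x, S1y, map_mul, map_one] using h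

lemma S1_y_xpow (k : ℕ) : S1y K * S1x K ^ (k + 1) = S1x K ^ k := by
  rw [pow_succ', ← mul_assoc, S1_yx, one_mul]

lemma S1_ypow_xpow_le {j k : ℕ} (h : j ≤ k) :
    S1y K ^ j * S1x K ^ k = S1x K ^ (k - j) := by
  induction j with
  | zero => simp
  | succ n ih =>
      have hn : n ≤ k := Nat.le_of_succ_le h
      obtain ⟨m, hm⟩ := Nat.exists_eq_add_of_le h  -- k = (n+1) + m
      have : S1y K ^ (n + 1) * S1x K ^ k = S1y K * (S1y K ^ n * S1x K ^ k) := by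
        rw [pow_succ', mul_assoc]
      rw [this, ih hn]
      have hkn : k - n = (k - (n+1)) + 1 := by omega
      rw [hkn, S1_y_xpow]

lemma S1_ypow_xpow_ge {j k : ℕ} (h : k ≤ j) :
    S1y K ^ j * S1x K ^ k = S1y K ^ (j - k) := by
  induction k with
  | zero => simp
  | succ n ih =>
      have hn : n ≤ j := Nat.le_of_succ_le h
      have : S1y K ^ j * S1x K ^ (n + 1) = (S1y K ^ j * S1x K ^ n) * S1x K := by
        rw [pow_succ, mul_assoc]
      rw [this, ih hn]
      have hj : j - n = (j - (n+1)) + 1 := by omega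
      rw [hj, pow_succ, mul_assoc, S1_yx, mul_one]

/-- The span of the monomials `x^i y^j`. -/
def S1M : Submodule K (S1 K) :=
  Submodule.span K (Set.range fun p : ℕ × ℕ => S1x K ^ p.1 * S1y K ^ p.2)

lemma S1M_mono (i j : ℕ) : S1x K ^ i * S1y K ^ j ∈ S1M K :=
  Submodule.subset_span ⟨(i, j), rfl⟩

lemma S1M_mul_mem {a b : S1 K} (ha : a ∈ S1M K) (hb : b ∈ S1M K) : a * b ∈ S1M K := by
  induction ha using Submodule.span_induction with
  | mem a h =>
      obtain ⟨⟨i, j⟩, rfl⟩ := h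
      induction hb using Submodule.span_induction with
      | mem b h' =>
          obtain ⟨⟨k, l⟩, rfl⟩ := h'
          rcases le_or_gt j k with hjk | hjk
          · have : S1x K ^ i * S1y K ^ j * (S1x K ^ k * S1y K ^ l)
                = S1x K ^ i * (S1y K ^ j * S1x K ^ k) * S1y K ^ l := by noncomm_ring
            rw [this, S1_ypow_xpow_le K hjk, ← pow_add]
            exact S1M_mono K _ _
          · have : S1x K ^ i * S1y K ^ j * (S1x K ^ k * S1y K ^ l)
                = S1x K ^ i * (S1y K ^ j * S1x K ^ k) * S1y K ^ l := by noncomm_ring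
            rw [this, S1_ypow_xpow_ge K hjk.le, mul_assoc, ← pow_add]
            exact S1M_mono K _ _
      | zero => simpa using (S1M K).zero_mem
      | add u v _ _ hu hv => simpa [mul_add] using (S1M K).add_mem hu hv
      | smul c u _ hu => simpa [mul_smul_comm] using (S1M K).smul_mem c hu
  | zero => simpa using (S1M K).zero_mem
  | add u v _ _ hu hv => simpa [add_mul] using (S1M K).add_mem hu hv
  | smul c u _ hu => simpa [smul_mul_assoc] using (S1M K).smul_mem c hu

lemma S1M_eq_top : ∀ a : S1 K, a ∈ S1M K := by
  intro a
  obtain ⟨f, rfl⟩ := RingQuot.mkAlgHom_surjective K (S1Rel K) a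
  induction f using FreeAlgebra.induction with
  | grade0 r =>
      rw [AlgHom.commutes, Algebra.algebraMap_eq_smul_one]
      exact (S1M K).smul_mem r (by simpa using S1M_mono K 0 0)
  | grade1 i =>
      fin_cases i
      · exact (by simpa using S1M_mono K 1 0 : S1x K ∈ S1M K)
      · exact (by simpa using S1M_mono K 0 1 : S1y K ∈ S1M K)
  | mul a b ha hb => rw [map_mul]; exact S1M_mul_mem K ha hb
  | add a b ha hb => rw [map_add]; exact (S1M K).add_mem ha hb

/-! The representation on `ℕ →₀ K`. -/

def S1X : Module.End K (ℕ →₀ K) := Finsupp.lmapDomain K K (· + 1)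

def S1Y : Module.End K (ℕ →₀ K) :=
  Finsupp.lsum K fun n => match n with
    | 0 => 0
    | m + 1 => Finsupp.lsingle m

lemma S1X_single (n : ℕ) (c : K) : S1X K (Finsupp.single n c) = Finsupp.single (n+1) c := by
  simp [S1X, Finsupp.mapDomain_single]

lemma S1Y_single_succ (n : ℕ) (c : K) :
    S1Y K (Finsupp.single (n+1) c) = Finsupp.single n c := by
  simp [S1Y]

lemma S1Y_single_zero (c : K) : S1Y K (Finsupp.single 0 c) = 0 := by
  simp [S1Y]

lemma S1YX : S1Y K * S1X K = 1 := by
  apply Finsupp.lhom_ext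
  intro n c
  simp [Module.End.mul_apply, S1X_single, S1Y_single_succ]

def S1rep : S1 K →ₐ[K] Module.End K (ℕ →₀ K) :=
  RingQuot.liftAlgHom K ⟨FreeAlgebra.lift K ![S1X K, S1Y K], by
    intro a b r
    cases r
    simp [map_mul, FreeAlgebra.lift_ι_apply, S1YX]⟩

lemma S1rep_x : S1rep K (S1x K) = S1X K := by
  simp [S1rep, S1x, RingQuot.liftAlgHom_mkAlgHom_apply, FreeAlgebra.lift_ι_apply]

lemma S1rep_y : S1rep K (S1y K) = S1Y K := by
  simp [S1rep, S1y, RingQuot.liftAlgHom_mkAlgHom_apply, FreeAlgebra.lift_ι_apply]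

lemma S1Xpow_single (i : ℕ) : ∀ n c, (S1X K ^ i) (Finsupp.single n c) = Finsupp.single (n + i) c := by
  induction i with
  | zero => simp
  | succ m ih =>
      intro n c
      rw [pow_succ', Module.End.mul_apply, ih, S1X_single, Nat.add_assoc]


lemma S1_mul_one_sub_mem (a : S1 K) :
    a * (1 - S1x K * S1y K) ∈ Submodule.span K
      (Set.range fun i : ℕ => S1x K ^ i * (1 - S1x K * S1y K)) := by
  have ha := S1M_eq_top K a
  induction ha using Submodule.span_induction with
  | mem b hb =>
      obtain ⟨⟨i, j⟩, rfl⟩ := hb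
      cases j with
      | zero =>
          have h0 : S1x K ^ i * S1y K ^ 0 * (1 - S1x K * S1y K)
              = S1x K ^ i * (1 - S1x K * S1y K) := by rw [pow_zero, mul_one]
          rw [h0]
          exact Submodule.subset_span (Set.mem_range_self i)
      | succ m =>
          have hy : S1y K * (1 - S1x K * S1y K) = 0 := by
            rw [mul_sub, mul_one, ← mul_assoc, S1_yx, one_mul, sub_self]
          have hrw : S1x K ^ i * S1y K ^ (m + 1) * (1 - S1x K * S1y K)
              = S1x K ^ i * S1y K ^ m * (S1y K * (1 - S1x K * S1y K)) := by
            rw [pow_succ]; noncomm_ring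
          rw [hrw, hy, mul_zero]
          exact zero_mem _
  | zero => simpa using zero_mem _
  | add u v _ _ hu hv => simpa [add_mul] using add_mem hu hv
  | smul c u _ hu => simpa [smul_mul_assoc] using Submodule.smul_mem _ c hu


/-- In `S₁ = K⟨x, y | yx = 1⟩`, the left annihilator of `x` is
`⊕_{i ≥ 0} K·x^i(1 − xy)` and the right annihilator of `x` is `0`. -/
theorem S1_annihilators_of_x (K : Type) [Field K] [CharZero K] :
    {a : S1 K | a * S1x K = 0}
        = (Submodule.span K
            (Set.range fun i : ℕ => S1x K ^ i * (1 - S1x K * S1y K)) : Submodule K (S1 K)) ∧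
    LinearIndependent K (fun i : ℕ => S1x K ^ i * (1 - S1x K * S1y K)) ∧
    {a : S1 K | S1x K * a = 0} = {0} := by
  have hgenx : ∀ i : ℕ, (S1x K ^ i * (1 - S1x K * S1y K)) * S1x K = 0 := by
    intro i
    have h1 : (1 - S1x K * S1y K) * S1x K = 0 := by
      rw [sub_mul, one_mul, mul_assoc, S1_yx, mul_one, sub_self]
    rw [mul_assoc, h1, mul_zero]
  refine ⟨?_, ?_, ?_⟩
  · ext a
    simp only [Set.mem_setOf_eq, SetLike.mem_coe]
    constructor
    · intro h
      have ha : a = a * (1 - S1x K * S1y K) := by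
        rw [mul_sub, mul_one, ← mul_assoc, h, zero_mul, sub_zero]
      rw [ha]
      exact S1_mul_one_sub_mem K a
    · intro h
      induction h using Submodule.span_induction with
      | mem b hb => obtain ⟨i, rfl⟩ := hb; exact hgenx i
      | zero => simp
      | add u v _ _ hu hv => rw [add_mul, hu, hv, add_zero]
      | smul c u _ hu => rw [smul_mul_assoc, hu, smul_zero]
  · set L : S1 K →ₗ[K] (ℕ →₀ K) :=
      (LinearMap.applyₗ (Finsupp.single 0 (1 : K))).comp (S1rep K).toLinearMap with hL
    have hLv : ∀ i : ℕ, L (S1x K ^ i * (1 - S1x K * S1y K)) = Finsupp.single i 1 := by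
      intro i
      have : S1rep K (S1x K ^ i * (1 - S1x K * S1y K))
          = S1X K ^ i * (1 - S1X K * S1Y K) := by
        rw [map_mul, map_pow, map_sub, map_one, map_mul, S1rep_x, S1rep_y]
      have goal : L (S1x K ^ i * (1 - S1x K * S1y K))
          = (S1X K ^ i * (1 - S1X K * S1Y K)) (Finsupp.single 0 1) := by
        simp only [hL, LinearMap.coe_comp, Function.comp_apply,
          AlgHom.toLinearMap_apply, this]
        rfl
      rw [goal, Module.End.mul_apply, LinearMap.sub_apply, Module.End.one_apply,
        Module.End.mul_apply, S1Y_single_zero, map_zero, sub_zero,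
        S1Xpow_single, Nat.zero_add]
    have hbasis : LinearIndependent K (fun i : ℕ => Finsupp.single i (1 : K)) := by
      have := (Finsupp.basisSingleOne (R := K) (ι := ℕ)).linearIndependent
      simpa [Finsupp.coe_basisSingleOne] using this
    apply LinearIndependent.of_comp L
    have : (L ∘ fun i : ℕ => S1x K ^ i * (1 - S1x K * S1y K))
        = fun i : ℕ => Finsupp.single i (1 : K) := funext fun i => hLv i
    rw [this]
    exact hbasis
  · ext a
    simp only [Set.mem_setOf_eq, Set.mem_singleton_iff]
    constructor
    · intro h
      calc a = (S1y K * S1x K) * a := by rw [S1_yx, one_mul]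
        _ = S1y K * (S1x K * a) := by rw [mul_assoc]
        _ = 0 := by rw [h, mul_zero]
    · intro h; rw [h, mul_zero]
end
end

section
/- In the algebra S₁ = K⟨x, y | yx = 1⟩, the left annihilator of y is zero and the right annihilator of y is ⊕_{i≥0} K·(1 − xy)y^i. -/
noncomputable section

namespace S1aux

variable (K : Type) [Field K]

lemma yx : S1y K * S1x K = 1 := by
  have h := RingQuot.mkAlgHom_rel K (S1Rel.rel (K := K))
  simpa [S1x, S1y, map_mul, map_one] using h

abbrev V := ℕ →₀ K

def X : Module.End K (V K) := Finsupp.lmapDomain K K (· + 1)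

def Yaux : ℕ → (K →ₗ[K] V K)
  | 0 => 0
  | (m + 1) => Finsupp.lsingle m

def Y : Module.End K (V K) := Finsupp.lsum K (Yaux K)

lemma X_single (n : ℕ) (c : K) : X K (Finsupp.single n c) = Finsupp.single (n + 1) c := by
  simp [X, Finsupp.lmapDomain, Finsupp.mapDomain_single]

lemma Y_single_succ (n : ℕ) (c : K) : Y K (Finsupp.single (n + 1) c) = Finsupp.single n c := by
  simp [Y, Finsupp.lsum_single, Yaux]

lemma Y_single_zero (c : K) : Y K (Finsupp.single 0 c) = 0 := by
  simp [Y, Finsupp.lsum_single, Yaux]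

lemma YX : Y K * X K = 1 := by
  apply Finsupp.lhom_ext
  intro n c
  simp [Module.End.mul_apply, X_single, Y_single_succ]

def rho : S1 K →ₐ[K] Module.End K (V K) :=
  RingQuot.liftAlgHom K ⟨FreeAlgebra.lift K ![X K, Y K], by
    intro a b h
    cases h
    simp [map_mul, FreeAlgebra.lift_ι_apply, YX]⟩

lemma rho_x : rho K (S1x K) = X K := by
  rw [S1x, rho, RingQuot.liftAlgHom_mkAlgHom_apply]
  simp [FreeAlgebra.lift_ι_apply]

lemma rho_y : rho K (S1y K) = Y K := by
  rw [S1y, rho, RingQuot.liftAlgHom_mkAlgHom_apply]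
  simp [FreeAlgebra.lift_ι_apply]

lemma Ypow_single (i j : ℕ) (c : K) :
    ((Y K) ^ i) (Finsupp.single (i + j) c) = Finsupp.single j c := by
  induction i with
  | zero => simp
  | succ n ih =>
      have : n + 1 + j = (n + j) + 1 := by omega
      rw [this, pow_succ, Module.End.mul_apply, Y_single_succ, ih]

lemma Ypow_single_lt (j k : ℕ) (c : K) :
    ((Y K) ^ (j + (k + 1))) (Finsupp.single j c) = 0 := by
  have : j + (k + 1) = (k + 1) + j := by omega
  rw [this, pow_add, Module.End.mul_apply]
  have h0 : ((Y K) ^ j) (Finsupp.single j c) = Finsupp.single 0 c := by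
    have := Ypow_single K j 0 c
    simpa using this
  rw [h0, pow_succ, Module.End.mul_apply, Y_single_zero, map_zero]

/-- The family spanning the right annihilator. -/
def u (i : ℕ) : S1 K := (1 - S1x K * S1y K) * S1y K ^ i

lemma rho_u_single (i j : ℕ) :
    rho K (u K i) (Finsupp.single j (1 : K))
      = if i = j then Finsupp.single 0 (1 : K) else 0 := by
  have hru : rho K (u K i) = (1 - X K * Y K) * (Y K) ^ i := by
    simp [u, map_mul, map_sub, map_one, map_pow, rho_x, rho_y]
  rw [hru, Module.End.mul_apply]
  rcases lt_trichotomy i j with h | h | h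
  · obtain ⟨m, rfl⟩ : ∃ m, j = i + (m + 1) := ⟨j - i - 1, by omega⟩
    rw [Ypow_single]
    simp only [LinearMap.sub_apply, Module.End.one_apply, Module.End.mul_apply,
      Y_single_succ, X_single]
    simp [Nat.ne_of_lt h]
  · subst h
    have h0 : ((Y K) ^ i) (Finsupp.single i (1 : K)) = Finsupp.single 0 1 := by
      simpa using Ypow_single K i 0 (1 : K)
    rw [h0]
    simp only [LinearMap.sub_apply, Module.End.one_apply, Module.End.mul_apply,
      Y_single_zero, map_zero]
    simp
  · obtain ⟨m, rfl⟩ : ∃ m, i = j + (m + 1) := ⟨i - j - 1, by omega⟩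
    rw [Ypow_single_lt]
    simp [Nat.ne_of_gt (by omega : j < j + (m+1))]

def phi (j : ℕ) : S1 K →ₗ[K] K where
  toFun a := rho K a (Finsupp.single j 1) 0
  map_add' a b := by simp [map_add]
  map_smul' c a := by simp [map_smul]

lemma phi_u (i j : ℕ) : phi K j (u K i) = if i = j then 1 else 0 := by
  simp only [phi, LinearMap.coe_mk, AddHom.coe_mk, rho_u_single]
  split <;> simp

lemma u_indep : LinearIndependent K (u K) := by
  rw [linearIndependent_iff']
  intro s g hg i hi
  have h := congrArg (phi K i) hg
  rw [map_sum, map_zero] at h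
  simp only [map_smul, phi_u, smul_eq_mul, mul_ite, mul_one, mul_zero] at h
  rwa [Finset.sum_ite_eq' s i g, if_pos hi] at h

lemma y_xpow (k : ℕ) : S1y K * S1x K ^ (k + 1) = S1x K ^ k := by
  rw [pow_succ', ← mul_assoc, yx, one_mul]

lemma ypow_xpow (j k : ℕ) :
    S1y K ^ j * S1x K ^ k = S1x K ^ (k - j) * S1y K ^ (j - k) := by
  induction j generalizing k with
  | zero => simp
  | succ n ih =>
      cases k with
      | zero => simp
      | succ m =>
          rw [pow_succ, mul_assoc, y_xpow, ih, Nat.succ_sub_succ, Nat.succ_sub_succ]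

def P : Submodule K (S1 K) :=
  Submodule.span K (Set.range fun p : ℕ × ℕ => S1x K ^ p.1 * S1y K ^ p.2)

lemma mono_mem (i j : ℕ) : S1x K ^ i * S1y K ^ j ∈ P K :=
  Submodule.subset_span ⟨(i, j), rfl⟩

lemma P_mul {a b : S1 K} (ha : a ∈ P K) (hb : b ∈ P K) : a * b ∈ P K := by
  induction ha using Submodule.span_induction with
  | mem a hm =>
      obtain ⟨⟨i, j⟩, rfl⟩ := hm
      induction hb using Submodule.span_induction with
      | mem b hm' =>
          obtain ⟨⟨k, l⟩, rfl⟩ := hm'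
          have : S1x K ^ i * S1y K ^ j * (S1x K ^ k * S1y K ^ l)
              = S1x K ^ (i + (k - j)) * S1y K ^ ((j - k) + l) := by
            rw [mul_assoc, ← mul_assoc (S1y K ^ j), ypow_xpow, pow_add, pow_add]
            simp only [mul_assoc]
          rw [this]
          exact mono_mem K _ _
      | zero => simpa using (P K).zero_mem
      | add b c _ _ hb hc => simpa [mul_add] using (P K).add_mem hb hc
      | smul r b _ hb => simpa [mul_smul_comm] using (P K).smul_mem r hb
  | zero => simpa using (P K).zero_mem
  | add a c _ _ h1 h2 => simpa [add_mul] using (P K).add_mem h1 h2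
  | smul r a _ h1 => simpa [smul_mul_assoc] using (P K).smul_mem r h1

lemma P_top : ∀ a : S1 K, a ∈ P K := by
  intro a
  obtain ⟨b, rfl⟩ := RingQuot.mkAlgHom_surjective K (S1Rel K) a
  induction b using FreeAlgebra.induction with
  | grade0 r =>
      rw [AlgHom.commutes, Algebra.algebraMap_eq_smul_one]
      exact (P K).smul_mem r (by simpa using mono_mem K 0 0)
  | grade1 i =>
      fin_cases i
      · simpa [S1x] using mono_mem K 1 0
      · simpa [S1y] using mono_mem K 0 1
  | mul a b ha hb => rw [map_mul]; exact P_mul K ha hb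
  | add a b ha hb => rw [map_add]; exact (P K).add_mem ha hb

lemma ex_zero : (1 - S1x K * S1y K) * S1x K = 0 := by
  rw [sub_mul, one_mul, mul_assoc, yx, mul_one, sub_self]

lemma ye_zero : S1y K * (1 - S1x K * S1y K) = 0 := by
  rw [mul_sub, mul_one, ← mul_assoc, yx, one_mul, sub_self]

lemma rann_sub {a : S1 K} (ha : S1y K * a = 0) :
    a ∈ Submodule.span K (Set.range (u K)) := by
  have h1 : a = (1 - S1x K * S1y K) * a := by
    rw [sub_mul, one_mul, mul_assoc, ha, mul_zero, sub_zero]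
  rw [h1]
  have hP := P_top K a
  clear h1 ha
  induction hP using Submodule.span_induction with
  | mem b hm =>
      obtain ⟨⟨i, j⟩, rfl⟩ := hm
      cases i with
      | zero =>
          simp only [pow_zero, one_mul]
          exact Submodule.subset_span ⟨j, rfl⟩
      | succ m =>
          have : (1 - S1x K * S1y K) * (S1x K ^ (m + 1) * S1y K ^ j)
              = ((1 - S1x K * S1y K) * S1x K) * (S1x K ^ m * S1y K ^ j) := by
            rw [pow_succ', mul_assoc, mul_assoc]
          rw [this, ex_zero, zero_mul]
          exact Submodule.zero_mem _
  | zero => simpa using Submodule.zero_mem _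
  | add b c _ _ hb hc => simpa [mul_add] using Submodule.add_mem _ hb hc
  | smul r b _ hb => simpa [mul_smul_comm] using Submodule.smul_mem _ r hb

end S1aux

/-- In `S₁ = K⟨x, y | yx = 1⟩`, the left annihilator of `y` is `0` and the
right annihilator of `y` is `⊕_{i ≥ 0} K·(1 − xy)y^i`. -/
theorem S1_annihilators_of_y (K : Type) [Field K] [CharZero K] :
    {a : S1 K | a * S1y K = 0} = {0} ∧
    {a : S1 K | S1y K * a = 0}
        = (Submodule.span K
            (Set.range fun i : ℕ => (1 - S1x K * S1y K) * S1y K ^ i) : Submodule K (S1 K)) ∧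
    LinearIndependent K (fun i : ℕ => (1 - S1x K * S1y K) * S1y K ^ i) := by
  refine ⟨?_, ?_, S1aux.u_indep K⟩
  · ext a
    simp only [Set.mem_setOf_eq, Set.mem_singleton_iff]
    constructor
    · intro h
      calc a = a * (S1y K * S1x K) := by rw [S1aux.yx, mul_one]
        _ = (a * S1y K) * S1x K := by rw [mul_assoc]
        _ = 0 := by rw [h, zero_mul]
    · rintro rfl; rw [zero_mul]
  · ext a
    simp only [Set.mem_setOf_eq, SetLike.mem_coe]
    constructor
    · exact S1aux.rann_sub K
    · intro h
      have hle : Submodule.span K (Set.range (S1aux.u K))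
          ≤ LinearMap.ker (LinearMap.mulLeft K (S1y K)) := by
        rw [Submodule.span_le]
        rintro _ ⟨i, rfl⟩
        simp only [SetLike.mem_coe, LinearMap.mem_ker, LinearMap.mulLeft_apply]
        rw [S1aux.u, ← mul_assoc, S1aux.ye_zero, zero_mul]
      have := hle h
      simpa using this
end
end
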